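/- Let $t > 0$, $\mu\in\mathbb{R}$, and $S(\mu,\xi)$ as above, and define $H(t,\mu,\xi) = \frac{1}{1 - it(\xi-\mu)^2(\xi^2+\mu\xi+\mu^2+1)}$. Then for all $\xi\in\mathbb{R}$, $e^{-itS(\mu,\xi)} = H(t,\mu,\xi)\,\partial_\xi\left((\xi-\mu)e^{-itS(\mu,\xi)}\right)$, and $|H(t,\mu,\xi)| \leq \frac{C}{1 + t(\xi-\mu)^2(\xi^2+\mu\xi+\mu^2+1)}$ for some absolute constant $C$. -/

import Mathlib

noncomputable def Sphase (μ ξ : ℝ) : ℝ :=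
  (1 / 4) * ξ ^ 4 + (1 / 2) * ξ ^ 2 - (μ ^ 3 + μ) * ξ + (3 / 4) * μ ^ 4 + (1 / 2) * μ ^ 2

noncomputable def Hfun (t μ ξ : ℝ) : ℂ :=
  1 / (1 - Complex.I * (t : ℂ) * ((ξ : ℂ) - μ) ^ 2 * ((ξ : ℂ) ^ 2 + (μ : ℂ) * ξ + (μ : ℂ) ^ 2 + 1))

/-!
Since `∂_ξ S(μ, ξ) = (ξ - μ) q` with `q = ξ² + μξ + μ² + 1 > 0`, the product rule gives
`∂_ξ ((ξ - μ) e^{-itS}) = e^{-itS} (1 - i a)` with `a = t (ξ - μ)² q ≥ 0`, and `H` is exactly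
`1 / (1 - i a)`. The bound follows from `‖1 - i a‖ ≥ max 1 a ≥ (1 + a) / 2`.
-/

open Complex

lemma hasDerivAt_sphase (μ ξ : ℝ) :
    HasDerivAt (Sphase μ) ((ξ - μ) * (ξ ^ 2 + μ * ξ + μ ^ 2 + 1)) ξ := by
  have h := ((((hasDerivAt_pow 4 ξ).const_mul (1 / 4 : ℝ)).add
    ((hasDerivAt_pow 2 ξ).const_mul (1 / 2 : ℝ))).sub
    ((hasDerivAt_id' ξ).const_mul (μ ^ 3 + μ))).add_const ((3 / 4) * μ ^ 4) |>.add_const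
    ((1 / 2) * μ ^ 2)
  refine h.congr_deriv ?_
  norm_num
  ring

lemma hasDerivAt_sub_mul_exp_sphase (t μ ξ : ℝ) :
    HasDerivAt (fun x : ℝ => ((x : ℂ) - μ) * exp (-I * t * (Sphase μ x : ℂ)))
      (exp (-I * t * (Sphase μ ξ : ℂ)) *
        (1 - I * ((t * (ξ - μ) ^ 2 * (ξ ^ 2 + μ * ξ + μ ^ 2 + 1) : ℝ) : ℂ))) ξ := by
  have hlin : HasDerivAt (fun x : ℝ => (x : ℂ) - μ) 1 ξ :=
    (hasDerivAt_id ξ).ofReal_comp.sub_const (μ : ℂ)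
  have hexp := ((hasDerivAt_sphase μ ξ).ofReal_comp.const_mul (-I * t)).cexp
  refine (hlin.mul hexp).congr_deriv ?_
  push_cast
  ring

lemma one_sub_I_mul_ofReal_ne_zero (a : ℝ) : 1 - I * a ≠ 0 := by
  intro h
  simpa using congrArg re h

lemma norm_one_div_one_sub_I_mul_ofReal_le {a : ℝ} (ha : 0 ≤ a) :
    ‖1 / (1 - I * a)‖ ≤ 2 / (1 + a) := by
  have hre : 1 ≤ ‖1 - I * a‖ := by
    simpa using abs_re_le_norm (1 - I * a)
  have him : a ≤ ‖1 - I * a‖ := by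
    simpa [abs_of_nonneg ha] using abs_im_le_norm (1 - I * a)
  rw [norm_div, norm_one, div_le_div_iff₀ (by linarith) (by linarith)]
  linarith

lemma hfun_eq_one_div_one_sub_I_mul (t μ ξ : ℝ) :
    Hfun t μ ξ = 1 / (1 - I * ((t * (ξ - μ) ^ 2 * (ξ ^ 2 + μ * ξ + μ ^ 2 + 1) : ℝ) : ℂ)) := by
  rw [Hfun]
  congr 2
  push_cast
  ring

lemma sq_add_mul_add_sq_add_one_pos (μ ξ : ℝ) : 0 < ξ ^ 2 + μ * ξ + μ ^ 2 + 1 := by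
  nlinarith [sq_nonneg (2 * ξ + μ), sq_nonneg μ]

theorem stmt7 :
    (∀ (t : ℝ), 0 < t → ∀ μ ξ : ℝ,
      Complex.exp (-Complex.I * (t : ℂ) * (Sphase μ ξ : ℂ)) =
        Hfun t μ ξ *
          deriv (fun x : ℝ => ((x : ℂ) - μ) *
            Complex.exp (-Complex.I * (t : ℂ) * (Sphase μ x : ℂ))) ξ) ∧
    ∃ C > (0 : ℝ), ∀ (t : ℝ), 0 < t → ∀ μ ξ : ℝ,
      ‖Hfun t μ ξ‖ ≤
        C / (1 + t * (ξ - μ) ^ 2 * (ξ ^ 2 + μ * ξ + μ ^ 2 + 1)) := by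
  refine ⟨fun t _ μ ξ => ?_, 2, two_pos, fun t ht μ ξ => ?_⟩
  · have hne := one_sub_I_mul_ofReal_ne_zero (t * (ξ - μ) ^ 2 * (ξ ^ 2 + μ * ξ + μ ^ 2 + 1))
    rw [(hasDerivAt_sub_mul_exp_sphase t μ ξ).deriv, hfun_eq_one_div_one_sub_I_mul,
      one_div_mul_eq_div, mul_div_assoc, div_self hne, mul_one]
  · rw [hfun_eq_one_div_one_sub_I_mul]
    exact norm_one_div_one_sub_I_mul_ofReal_le
      (by have := sq_add_mul_add_sq_add_one_pos μ ξ; positivity)
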